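/- arXiv:2407.19233 — 2 statements merged into one kernel-verified Lean document; each statement's English description precedes it below -/
import Mathlib

section
/- Let V be a standard Borel space and let (X_J)_{J∈𝒥} be a V-valued exchangeable array, realized canonically with law P. Let (j_l)_{l≥1} be a strictly increasing sequence of positive integers with j_0 = 0 and j_l − j_{l−1} ≤ k for all l ≥ 1, and set J_l = {j_{l−1}+1, j_{l−1}+2, …, j_l}. Then the random variables (X_{J_l})_{l=1}^∞ are conditionally independent given the tail σ-algebra 𝒢. -/
open MeasureTheory Filter Topology

noncomputable section

/-- The index set `𝒥`: nonempty subsets of `ℕ` of cardinality at most `k`. -/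
abbrev Idx (k : ℕ) := {J : Finset ℕ // J.Nonempty ∧ J.card ≤ k}

/-- Action of a permutation of `ℕ` on the index set: `J ↦ τ(J)`. -/
def permIdx (k : ℕ) (τ : Equiv.Perm ℕ) (J : Idx k) : Idx k :=
  ⟨J.1.image τ, J.2.1.image τ, by
    rw [Finset.card_image_of_injective _ τ.injective]; exact J.2.2⟩

/-- Action of a permutation on the canonical space `V ^ 𝒥`. -/
def permAct (k : ℕ) (V : Type*) (τ : Equiv.Perm ℕ) (ω : Idx k → V) : Idx k → V :=
  fun J => ω (permIdx k τ J)

/-- Exchangeability of the canonical array. -/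
def IsExchangeable (k : ℕ) {V : Type*} [MeasurableSpace V] (P : Measure (Idx k → V)) : Prop :=
  ∀ τ : Equiv.Perm ℕ, {x | τ x ≠ x}.Finite → Measure.map (permAct k V τ) P = P

/-- The `N`-fold shift `S^N` on the index set: `{γ₁,…,γ_l} ↦ {γ₁+N,…,γ_l+N}`. -/
def shiftIdx (k : ℕ) (N : ℕ) (J : Idx k) : Idx k :=
  ⟨J.1.image (· + N), J.2.1.image _, by
    rw [Finset.card_image_of_injective _ (add_left_injective N)]; exact J.2.2⟩

/-- The σ-algebra `𝒢_N = σ(X_{S^N(J)} : J ∈ 𝒥)`. -/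
def tailSigmaN (k : ℕ) (V : Type*) [MeasurableSpace V] (N : ℕ) :
    MeasurableSpace (Idx k → V) :=
  MeasurableSpace.comap (fun ω : Idx k → V => fun J => ω (shiftIdx k N J)) inferInstance

/-- The tail σ-algebra `𝒢 = ⋂_{N ≥ 1} 𝒢_N`. -/
def tailSigma (k : ℕ) (V : Type*) [MeasurableSpace V] : MeasurableSpace (Idx k → V) :=
  ⨅ N : ℕ, tailSigmaN k V (N + 1)

open scoped ENNReal

/-!
Write `g` for the product of the first `n` block indicators and `F` for the next one. For every
`N`, a finitary permutation swapping the block `J_n` with a block beyond `N` fixes `g` and every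
tail event, so by exchangeability `F` may be replaced, jointly with `g`, by the moved indicator
`F_N`, which is `𝒢_N`-measurable. Pulling `F_N` out of the conditional expectations gives
`E[gF | 𝒢] - E[g | 𝒢] E[F | 𝒢] = E[(E[g | 𝒢_N] - E[g | 𝒢]) F_N | 𝒢]`, and the right-hand side
tends to `0` in `L²` by the backward martingale convergence theorem, which is the convergence of
orthogonal projections onto a decreasing sequence of closed subspaces. Induction on `n` concludes.
-/

namespace Submodule
variable {𝕜 E : Type*} [RCLike 𝕜] [NormedAddCommGroup E] [InnerProductSpace 𝕜 E] [CompleteSpace E]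

theorem topologicalClosure_iSup_orthogonal_eq {ι : Type*} (U : ι → Submodule 𝕜 E)
    [∀ i, (U i).HasOrthogonalProjection] :
    (⨆ i, (U i)ᗮ).topologicalClosure = (⨅ i, U i)ᗮ := by
  rw [← orthogonal_orthogonal_eq_closure, ← iInf_orthogonal]
  simp only [orthogonal_orthogonal]

theorem starProjection_tendsto_iInf {ι : Type*} [Preorder ι]
    (U : ι → Submodule 𝕜 E) [∀ i, (U i).HasOrthogonalProjection]
    [(⨅ i, U i).HasOrthogonalProjection] (hU : Antitone U) (x : E) :
    Tendsto (fun i => (U i).starProjection x) atTop (𝓝 ((⨅ i, U i).starProjection x)) := by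
  have := starProjection_tendsto_closure_iSup (fun i => (U i)ᗮ)
    (fun i j hij => orthogonal_le (hU hij)) x
  simp only [topologicalClosure_iSup_orthogonal_eq, starProjection_orthogonal_val] at this
  simpa using (tendsto_const_nhds (x := x)).sub this

end Submodule

namespace MeasureTheory
variable {Ω : Type*} {m0 : MeasurableSpace Ω} {μ : Measure Ω} {m : ℕ → MeasurableSpace Ω}

theorem aestronglyMeasurable_iInf_of_antitone (hm : Antitone m) {f : Ω → ℝ}
    (hf : ∀ N, AEStronglyMeasurable[m N] f μ) : AEStronglyMeasurable[⨅ N, m N] f μ := by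
  choose g hg using hf
  -- The `limsup` of the versions `g N` is `m M`-measurable for every `M` simultaneously.
  refine ⟨fun ω => limsup (fun N => g N ω) atTop, ?_, ?_⟩
  · refine Measurable.stronglyMeasurable fun s hs =>
      MeasurableSpace.measurableSet_iInf.2 fun M => ?_
    have hshift : (fun ω => limsup (fun N => g N ω) atTop)
        = fun ω => limsup (fun N => g (N + M) ω) atTop := by
      funext ω; exact (limsup_nat_add _ M).symm
    rw [hshift]
    exact Measurable.limsup
      (fun N => ((hg (N + M)).1.mono (hm (Nat.le_add_left M N))).measurable) hs
  · filter_upwards [ae_all_iff.2 fun N => (hg N).2] with ω hω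
    simp [← hω]

theorem lpMeas_iInf_of_antitone {p : ℝ≥0∞} (hm : Antitone m) :
    lpMeas ℝ ℝ (⨅ N, m N) p μ = ⨅ N, lpMeas ℝ ℝ (m N) p μ := by
  ext f
  simp only [Submodule.mem_iInf, mem_lpMeas_iff_aestronglyMeasurable]
  exact ⟨fun h N => h.mono (iInf_le m N), aestronglyMeasurable_iInf_of_antitone hm⟩

theorem tendsto_condExpL2_iInf (hm : Antitone m) (hle : ∀ N, m N ≤ m0) (f : Lp ℝ 2 μ) :
    Tendsto (fun N => (condExpL2 ℝ ℝ (hle N) f : Lp ℝ 2 μ)) atTop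
      (𝓝 (condExpL2 ℝ ℝ ((iInf_le m 0).trans (hle 0)) f)) := by
  have : ∀ N, Fact (m N ≤ m0) := fun N => ⟨hle N⟩
  have : Fact ((⨅ N, m N) ≤ m0) := ⟨(iInf_le m 0).trans (hle 0)⟩
  have : (⨅ N, lpMeas ℝ ℝ (m N) 2 μ).HasOrthogonalProjection := by
    rw [← lpMeas_iInf_of_antitone hm]; infer_instance
  have := Submodule.starProjection_tendsto_iInf (fun N => lpMeas ℝ ℝ (m N) 2 μ)
    (fun M N h f hf => by
      rw [mem_lpMeas_iff_aestronglyMeasurable] at hf ⊢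
      exact hf.mono (hm h)) f
  simp only [← lpMeas_iInf_of_antitone hm] at this
  exact this

theorem tendsto_eLpNorm_condExp_sub_condExp_iInf [IsFiniteMeasure μ] (hm : Antitone m)
    (hle : ∀ N, m N ≤ m0) {g : Ω → ℝ} (hg : MemLp g 2 μ) :
    Tendsto (fun N => eLpNorm (μ[g|m N] - μ[g|⨅ N, m N]) 2 μ) atTop (𝓝 0) := by
  have hinf : (⨅ N, m N) ≤ m0 := (iInf_le m 0).trans (hle 0)
  refine ((Lp.tendsto_Lp_iff_tendsto_eLpNorm' _ _).1
    (tendsto_condExpL2_iInf hm hle hg.toLp)).congr fun N => eLpNorm_congr_ae ?_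
  filter_upwards [hg.condExpL2_ae_eq_condExp (𝕜 := ℝ) (hle N),
    hg.condExpL2_ae_eq_condExp (𝕜 := ℝ) hinf] with ω hN hinf
  simp [hN, hinf]

theorem condExp_mul_ae_eq_of_copies [IsFiniteMeasure μ] {𝒢 : MeasurableSpace Ω}
    (h𝒢 : ∀ N, 𝒢 ≤ m N) (hle : ∀ N, m N ≤ m0) {g F : Ω → ℝ} {f : ℕ → Ω → ℝ} {C : ℝ}
    {p : ℝ≥0∞} (hp : 1 ≤ p) (hg : Integrable g μ) (hf : ∀ N, StronglyMeasurable[m N] (f N))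
    (hfC : ∀ N ω, |f N ω| ≤ C) (hgF : ∀ N, μ[g * F|𝒢] =ᵐ[μ] μ[g * f N|𝒢])
    (hF : ∀ N, μ[F|𝒢] =ᵐ[μ] μ[f N|𝒢])
    (hlim : Tendsto (fun N => eLpNorm (μ[g|m N] - μ[g|𝒢]) p μ) atTop (𝓝 0)) :
    μ[g * F|𝒢] =ᵐ[μ] μ[g|𝒢] * μ[F|𝒢] := by
  set u := μ[g|𝒢]
  have hfint : ∀ N, Integrable (f N) μ := fun N =>
    Integrable.of_bound ((hf N).mono (hle N)).aestronglyMeasurable C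
      (ae_of_all _ fun ω => (Real.norm_eq_abs _).trans_le (hfC N ω))
  have hmul : ∀ N {v : Ω → ℝ}, Integrable v μ → Integrable (v * f N) μ := fun N v hv =>
    hv.mul_bdd ((hf N).mono (hle N)).aestronglyMeasurable
      (ae_of_all _ fun ω => (Real.norm_eq_abs _).trans_le (hfC N ω))
  have hdiff : ∀ N, μ[g * F|𝒢] - u * μ[F|𝒢] =ᵐ[μ] μ[(μ[g|m N] - u) * f N|𝒢] := by
    intro N
    have hgf : μ[g * f N|𝒢] =ᵐ[μ] μ[μ[g|m N] * f N|𝒢] :=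
      (condExp_condExp_of_le (h𝒢 N) (hle N)).symm.trans
        (condExp_congr_ae (condExp_mul_of_stronglyMeasurable_right (hf N) (hmul N hg) hg))
    have huf : μ[u * f N|𝒢] =ᵐ[μ] u * μ[f N|𝒢] :=
      condExp_mul_of_stronglyMeasurable_left stronglyMeasurable_condExp
        (hmul N integrable_condExp) (hfint N)
    rw [sub_mul]
    filter_upwards [hgF N, hF N, hgf, huf,
      condExp_sub (hmul N integrable_condExp) (hmul N integrable_condExp) 𝒢]
      with ω hgF hF hgf huf hsub
    simp only [Pi.sub_apply, Pi.mul_apply] at *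
    rw [hgF, hF, hgf, hsub, ← huf]
  have hbound : ∀ N, eLpNorm (μ[g * F|𝒢] - u * μ[F|𝒢]) p μ
      ≤ ENNReal.ofReal C * eLpNorm (μ[g|m N] - u) p μ := fun N => calc
    _ = eLpNorm (μ[(μ[g|m N] - u) * f N|𝒢]) p μ := eLpNorm_congr_ae (hdiff N)
    _ ≤ eLpNorm ((μ[g|m N] - u) * f N) p μ := eLpNorm_condExp_le_eLpNorm _ hp
    _ ≤ ENNReal.ofReal C * eLpNorm (μ[g|m N] - u) p μ :=
      eLpNorm_le_mul_eLpNorm_of_ae_le_mul (ae_of_all _ fun ω => by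
        simp only [Pi.mul_apply, norm_mul, Real.norm_eq_abs]
        rw [mul_comm]
        exact mul_le_mul_of_nonneg_right (hfC N ω) (abs_nonneg _)) p
  have hzero : eLpNorm (μ[g * F|𝒢] - u * μ[F|𝒢]) p μ = 0 :=
    le_antisymm (ge_of_tendsto
      (by simpa using ENNReal.Tendsto.const_mul hlim (.inr ENNReal.ofReal_ne_top))
      (Eventually.of_forall hbound)) bot_le
  rw [eLpNorm_eq_zero_iff (integrable_condExp.aestronglyMeasurable.sub
    (integrable_condExp.aestronglyMeasurable.mul integrable_condExp.aestronglyMeasurable))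
    (zero_lt_one.trans_le hp).ne'] at hzero
  exact (sub_ae_eq_zero _ _).1 hzero

end MeasureTheory

def blockSwap (a b t : ℕ) (h : b ≤ a + t) : Equiv.Perm ℕ :=
  Function.Involutive.toPerm
    (fun x => if a < x ∧ x ≤ b then x + t else if a + t < x ∧ x ≤ b + t then x - t else x)
    (fun x => by dsimp only; split_ifs <;> omega)

section BlockSwap

variable {a b t : ℕ} {h : b ≤ a + t} {x : ℕ}

lemma blockSwap_apply : blockSwap a b t h x =
    if a < x ∧ x ≤ b then x + t else if a + t < x ∧ x ≤ b + t then x - t else x :=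
  rfl

lemma blockSwap_of_le (hx : x ≤ a) : blockSwap a b t h x = x := by
  rw [blockSwap_apply]; split_ifs <;> omega

lemma blockSwap_of_mem (hax : a < x) (hxb : x ≤ b) : blockSwap a b t h x = x + t := by
  rw [blockSwap_apply]; split_ifs <;> omega

lemma blockSwap_of_lt (hx : b + t < x) : blockSwap a b t h x = x := by
  rw [blockSwap_apply]; split_ifs <;> omega

end BlockSwap

def blockIndicator {k : ℕ} {V : Type*} (A : Set V) (K : Idx k) (ω : Idx k → V) : ℝ :=
  A.indicator (fun _ => 1) (ω K)

lemma abs_blockIndicator_le_one {k : ℕ} {V : Type*} (A : Set V) (K : Idx k) (ω : Idx k → V) :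
    |blockIndicator A K ω| ≤ 1 := by
  unfold blockIndicator
  by_cases hω : ω K ∈ A <;> simp [hω]

lemma norm_prod_blockIndicator_le_one {k : ℕ} {V : Type*} (A : ℕ → Set V) (J : ℕ → Idx k)
    (n : ℕ) (ω : Idx k → V) : ‖∏ l ∈ Finset.range n, blockIndicator (A l) (J l) ω‖ ≤ 1 := by
  rw [Real.norm_eq_abs, Finset.abs_prod]
  exact Finset.prod_le_one (fun _ _ => abs_nonneg _) fun l _ => abs_blockIndicator_le_one _ _ _

lemma permIdx_eq_self {k : ℕ} {τ : Equiv.Perm ℕ} {K : Idx k} (hτ : ∀ x ∈ K.1, τ x = x) :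
    permIdx k τ K = K :=
  Subtype.ext <| (Finset.image_congr (g := id) hτ).trans Finset.image_id

lemma prod_blockIndicator_comp_permAct {k : ℕ} {V : Type*} {j : ℕ → ℕ} (hmono : Monotone j)
    {J : ℕ → Idx k} (hJ : ∀ l, (J l).1 = Finset.Ioc (j l) (j (l + 1))) (A : ℕ → Set V) {n : ℕ}
    {τ : Equiv.Perm ℕ} (hτ : ∀ x ≤ j n, τ x = x) :
    (fun ω => ∏ l ∈ Finset.range n, blockIndicator (A l) (J l) ω) ∘ permAct k V τ
      = fun ω => ∏ l ∈ Finset.range n, blockIndicator (A l) (J l) ω :=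
  funext fun ω => Finset.prod_congr rfl fun l hl => by
    refine congrArg (fun K => blockIndicator (A l) K ω) (permIdx_eq_self fun x hx => hτ x ?_)
    exact (Finset.mem_Ioc.1 (hJ l ▸ hx)).2.trans (hmono (Finset.mem_range.1 hl))

section ExchangeableArray

variable {k : ℕ} {V : Type*} [MeasurableSpace V]

lemma measurable_permAct (τ : Equiv.Perm ℕ) : Measurable (permAct k V τ) :=
  measurable_pi_lambda _ fun _ => measurable_pi_apply _

lemma measurable_apply_tailSigmaN {N : ℕ} {K : Idx k} (hK : ∀ x ∈ K.1, N ≤ x) :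
    Measurable[tailSigmaN k V N] fun ω : Idx k → V => ω K := by
  let K' : Idx k := ⟨K.1.image (· - N), K.2.1.image _, Finset.card_image_le.trans K.2.2⟩
  have hK' : shiftIdx k N K' = K := by
    refine Subtype.ext ?_
    simp only [shiftIdx, K', Finset.image_image]
    refine (Finset.image_congr fun x hx => ?_).trans Finset.image_id
    have := hK x hx
    simp only [Function.comp_apply, id_eq]
    omega
  have : (fun ω : Idx k → V => ω K) = (fun ω => ω K') ∘ fun ω J => ω (shiftIdx k N J) := by
    funext ω; simp [hK']
  rw [this]
  exact (measurable_pi_apply K').comp (comap_measurable _)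

lemma tailSigmaN_le (N : ℕ) : tailSigmaN k V N ≤ MeasurableSpace.pi :=
  (measurable_pi_lambda _ fun _ => measurable_pi_apply _).comap_le

lemma tailSigmaN_antitone : Antitone (tailSigmaN k V) := fun M N hMN => by
  refine Measurable.comap_le (@measurable_pi_lambda _ _ _ (tailSigmaN k V M) _ _ fun J =>
    measurable_apply_tailSigmaN fun x hx => ?_)
  obtain ⟨y, -, rfl⟩ := Finset.mem_image.1 hx
  omega

lemma tailSigma_le_tailSigmaN (N : ℕ) : tailSigma k V ≤ tailSigmaN k V (N + 1) :=
  iInf_le _ N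

lemma tailSigma_le : tailSigma k V ≤ MeasurableSpace.pi :=
  (tailSigma_le_tailSigmaN 0).trans (tailSigmaN_le 1)

lemma preimage_permAct_eq_of_measurableSet {τ : Equiv.Perm ℕ} {M : ℕ}
    (hτ : ∀ x, M ≤ x → τ x = x) {s : Set (Idx k → V)} (hs : MeasurableSet[tailSigmaN k V M] s) :
    permAct k V τ ⁻¹' s = s := by
  obtain ⟨t, -, rfl⟩ := hs
  ext ω
  simp only [Set.mem_preimage]
  suffices h : (fun J => permAct k V τ ω (shiftIdx k M J)) = fun J => ω (shiftIdx k M J) by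
    rw [h]
  funext J
  refine congrArg ω (permIdx_eq_self fun x hx => hτ x ?_)
  obtain ⟨y, -, rfl⟩ := Finset.mem_image.1 hx
  omega

lemma IsExchangeable.condExp_comp_permAct {P : Measure (Idx k → V)} [IsProbabilityMeasure P]
    (hP : IsExchangeable k P) {τ : Equiv.Perm ℕ} {M : ℕ} (hτ : ∀ x, M ≤ x → τ x = x)
    {h : (Idx k → V) → ℝ} (hh : Integrable h P) :
    P[h ∘ permAct k V τ|tailSigma k V] =ᵐ[P] P[h|tailSigma k V] := by
  have hfin : {x | τ x ≠ x}.Finite :=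
    (Set.finite_Iio M).subset fun x hx => not_le.1 fun hMx => hx (hτ x hMx)
  have hmap := hP τ hfin
  have h𝒢 : tailSigma k V ≤ MeasurableSpace.pi := tailSigma_le
  have hh' : Integrable h (P.map (permAct k V τ)) := by rwa [hmap]
  refine (ae_eq_condExp_of_forall_setIntegral_eq h𝒢 (hh'.comp_measurable (measurable_permAct τ))
    (fun s _ _ => integrable_condExp.integrableOn) (fun s hs _ => ?_)
    stronglyMeasurable_condExp.aestronglyMeasurable).symm
  have hsM : MeasurableSet[tailSigmaN k V (M + 1)] s := MeasurableSpace.measurableSet_iInf.1 hs M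
  calc ∫ ω in s, (P[h|tailSigma k V]) ω ∂P = ∫ ω in s, h ω ∂P := setIntegral_condExp h𝒢 hh hs
    _ = ∫ ω in s, h ω ∂P.map (permAct k V τ) := by rw [hmap]
    _ = ∫ ω in permAct k V τ ⁻¹' s, h (permAct k V τ ω) ∂P :=
      setIntegral_map (h𝒢 s hs) hh'.aestronglyMeasurable (measurable_permAct τ).aemeasurable
    _ = ∫ ω in s, (h ∘ permAct k V τ) ω ∂P := by
      rw [preimage_permAct_eq_of_measurableSet (fun x hx => hτ x (by omega)) hsM]; rfl

lemma measurable_blockIndicator {A : Set V} (hA : MeasurableSet A) (K : Idx k) :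
    Measurable (blockIndicator A K) :=
  (measurable_const.indicator hA).comp (measurable_pi_apply K)

lemma measurable_blockIndicator_comp_permAct_blockSwap {A : Set V} (hA : MeasurableSet A)
    {K : Idx k} {a b t : ℕ} {h : b ≤ a + t} (hK : ∀ x ∈ K.1, a < x ∧ x ≤ b) :
    Measurable[tailSigmaN k V (t + 1)] (blockIndicator A K ∘ permAct k V (blockSwap a b t h)) := by
  refine (measurable_const.indicator hA).comp (measurable_apply_tailSigmaN fun x hx => ?_)
  obtain ⟨y, hy, rfl⟩ := Finset.mem_image.1 hx
  obtain ⟨hay, hyb⟩ := hK y hy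
  rw [blockSwap_of_mem hay hyb]
  omega

lemma IsExchangeable.condExp_prod_mul_blockIndicator {P : Measure (Idx k → V)}
    [IsProbabilityMeasure P] (hP : IsExchangeable k P) {j : ℕ → ℕ} (hmono : Monotone j)
    {J : ℕ → Idx k} (hJ : ∀ l, (J l).1 = Finset.Ioc (j l) (j (l + 1))) {A : ℕ → Set V}
    (hA : ∀ l, MeasurableSet (A l)) (n : ℕ) :
    P[(fun ω => ∏ l ∈ Finset.range n, blockIndicator (A l) (J l) ω) * blockIndicator (A n) (J n)
        | tailSigma k V]
      =ᵐ[P] P[fun ω => ∏ l ∈ Finset.range n, blockIndicator (A l) (J l) ω | tailSigma k V]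
        * P[blockIndicator (A n) (J n) | tailSigma k V] := by
  set g := fun ω => ∏ l ∈ Finset.range n, blockIndicator (A l) (J l) ω
  set F := blockIndicator (A n) (J n)
  let σ : ℕ → Equiv.Perm ℕ := fun N => blockSwap (j n) (j (n + 1)) (N + j (n + 1)) (by omega)
  have hσ_tail : ∀ N x, j (n + 1) + (N + j (n + 1)) + 1 ≤ x → σ N x = x := fun N x hx =>
    blockSwap_of_lt (by omega)
  have hg_meas : Measurable g :=
    Finset.measurable_prod _ fun l _ => measurable_blockIndicator (hA l) _
  have hg_L2 : MemLp g 2 P :=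
    .of_bound hg_meas.aestronglyMeasurable 1 (ae_of_all _ (norm_prod_blockIndicator_le_one A J n))
  have hF_int : Integrable F P :=
    .of_bound (measurable_blockIndicator (hA n) _).aestronglyMeasurable 1
      (ae_of_all _ fun ω => abs_blockIndicator_le_one _ _ _)
  have hgF_int : Integrable (g * F) P := hF_int.bdd_mul hg_meas.aestronglyMeasurable
    (ae_of_all _ (norm_prod_blockIndicator_le_one A J n))
  refine condExp_mul_ae_eq_of_copies (m := fun N => tailSigmaN k V (N + j (n + 1) + 1))
    (fun N => tailSigma_le_tailSigmaN _) (fun N => tailSigmaN_le _) one_le_two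
    (hg_L2.integrable one_le_two)
    (fun N => (measurable_blockIndicator_comp_permAct_blockSwap (hA n)
      fun x hx => Finset.mem_Ioc.1 (hJ n ▸ hx)).stronglyMeasurable)
    (C := 1) (fun N ω => abs_blockIndicator_le_one _ _ _)
    (fun N => ?_) (fun N => (hP.condExp_comp_permAct (hσ_tail N) hF_int).symm) ?_
  · have hg_inv : g ∘ permAct k V (σ N) = g :=
      prod_blockIndicator_comp_permAct hmono hJ A fun x hx => blockSwap_of_le hx
    have : g * (F ∘ permAct k V (σ N)) = (g * F) ∘ permAct k V (σ N) := funext fun ω =>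
      congrArg (· * F (permAct k V (σ N) ω)) (congrFun hg_inv ω).symm
    rw [this]
    exact (hP.condExp_comp_permAct (hσ_tail N) hgF_int).symm
  · have hlevy : Tendsto (fun L => eLpNorm (P[g|tailSigmaN k V (L + 1)] - P[g|tailSigma k V]) 2 P)
        atTop (𝓝 0) :=
      tendsto_eLpNorm_condExp_sub_condExp_iInf (fun L M h => tailSigmaN_antitone (by omega))
        (fun L => tailSigmaN_le _) hg_L2
    exact hlevy.comp (tendsto_add_atTop_nat _)

end ExchangeableArray

theorem statement1_general (k : ℕ) (V : Type*) [MeasurableSpace V]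
    (P : Measure (Idx k → V)) [IsProbabilityMeasure P] (hP : IsExchangeable k P)
    (j : ℕ → ℕ) (hmono : StrictMono j)
    (J : ℕ → Idx k) (hJ : ∀ l, (J l).1 = Finset.Ioc (j l) (j (l + 1)))
    (n : ℕ) (A : ℕ → Set V) (hA : ∀ l, MeasurableSet (A l)) :
    P[(fun ω => ∏ l ∈ Finset.range n, (A l).indicator (fun _ => (1 : ℝ)) (ω (J l))) |
        tailSigma k V]
      =ᵐ[P] fun ω => ∏ l ∈ Finset.range n,
        (P[(fun ω' => (A l).indicator (fun _ => (1 : ℝ)) (ω' (J l))) | tailSigma k V]) ω := by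
  change P[fun ω => ∏ l ∈ Finset.range n, blockIndicator (A l) (J l) ω | tailSigma k V]
    =ᵐ[P] fun ω => ∏ l ∈ Finset.range n, P[blockIndicator (A l) (J l) | tailSigma k V] ω
  induction n with
  | zero =>
    simp only [Finset.range_zero, Finset.prod_empty]
    rw [condExp_const tailSigma_le]
  | succ n ih =>
    simp only [Finset.prod_range_succ]
    filter_upwards [hP.condExp_prod_mul_blockIndicator hmono.monotone hJ hA n, ih]
      with ω hstep hprod
    rw [← hprod, ← Pi.mul_apply, ← hstep]
    rfl

/-- for an exchangeable array realized canonically, and consecutive blocks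
`J_l = {j_{l-1}+1, …, j_l}` of lengths at most `k`, the random variables `X_{J_l}` are
conditionally independent given the tail σ-algebra `𝒢`. -/
theorem statement1 (k : ℕ) (V : Type*) [MeasurableSpace V] [StandardBorelSpace V]
    (P : Measure (Idx k → V)) [IsProbabilityMeasure P] (hP : IsExchangeable k P)
    (j : ℕ → ℕ) (hj0 : j 0 = 0) (hmono : StrictMono j) (hgap : ∀ l, j (l + 1) - j l ≤ k)
    (J : ℕ → Idx k) (hJ : ∀ l, (J l).1 = Finset.Ioc (j l) (j (l + 1)))
    (n : ℕ) (hn : 1 ≤ n) (A : ℕ → Set V) (hA : ∀ l, MeasurableSet (A l)) :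
    P[(fun ω => ∏ l ∈ Finset.range n, (A l).indicator (fun _ => (1 : ℝ)) (ω (J l))) |
        tailSigma k V]
      =ᵐ[P] fun ω => ∏ l ∈ Finset.range n,
        (P[(fun ω' => (A l).indicator (fun _ => (1 : ℝ)) (ω' (J l))) | tailSigma k V]) ω :=
  statement1_general k V P hP j hmono J hJ n A hA

end
end

section
/- Let N ≥ 1, R ≥ 1, let a_1,…,a_R ∈ ℂ, and for 1 ≤ r ≤ R and 1 ≤ i ≤ N let f_{r,i} : ℝ → ℂ be infinitely differentiable. Suppose that the function g(t_1,…,t_N) = Σ_{r=1}^R a_r ∏_{i=1}^N f_{r,i}(t_i) is symmetric in (t_1,…,t_N). Then for every t ∈ ℝ, applying the differential operator ∏_{1≤i<j≤N} (∂/∂t_j − ∂/∂t_i)² (the composition of the operators (∂/∂t_j − ∂/∂t_i)² over all pairs i < j) to g and evaluating at t_1 = ⋯ = t_N = t yields N! · Σ_{r=1}^R a_r · det_{0≤i,j≤N−1}[ f_{r,i+1}^{(i+j)}(t) ], where f^{(d)} denotes the d-th derivative. -/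
open MeasureTheory Filter Topology

noncomputable section

/-- The first-order differential operator `(∂/∂t_j - ∂/∂t_i)`, acting on functions
`(Fin N → ℝ) → ℂ` as the directional (line) derivative along `e_j - e_i`. -/
def Dop (N : ℕ) (i j : Fin N) (f : (Fin N → ℝ) → ℂ) : (Fin N → ℝ) → ℂ :=
  fun t => lineDeriv ℝ f t (Pi.single j 1 - Pi.single i 1)

/-- The composition of the squared operators `(∂/∂t_j - ∂/∂t_i)²` along a list of pairs. -/
def applyOps (N : ℕ) : List (Fin N × Fin N) → ((Fin N → ℝ) → ℂ) → ((Fin N → ℝ) → ℂ)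
  | [], f => f
  | (p :: ps), f => Dop N p.1 p.2 (Dop N p.1 p.2 (applyOps N ps f))

namespace Statement12Aux

variable {N R : ℕ}

/-- Sum of products of iterated derivatives with multi-index `d`. -/
def SPd (a : Fin R → ℂ) (u : Fin R → Fin N → ℝ → ℂ) (d : Fin N → ℕ) : (Fin N → ℝ) → ℂ :=
  fun tt => ∑ r, a r * ∏ i, iteratedDeriv (d i) (u r i) (tt i)

/-- bump the multi-index at one coordinate -/
def bump (k : Fin N) (d : Fin N → ℕ) : Fin N → ℕ := fun i => d i + if i = k then 1 else 0

lemma SPd_congr (a : Fin R → ℂ) (u : Fin R → Fin N → ℝ → ℂ) {d d' : Fin N → ℕ}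
    (h : ∀ i, d i = d' i) : SPd a u d = SPd a u d' := by
  rw [show d = d' from funext h]

lemma hasDerivAt_it {u : ℝ → ℂ} (hu : ContDiff ℝ (⊤ : ℕ∞) u) (n : ℕ) (x : ℝ) :
    HasDerivAt (iteratedDeriv n u) (iteratedDeriv (n + 1) u x) x := by
  have hd : Differentiable ℝ (iteratedDeriv n u) :=
    hu.differentiable_iteratedDeriv n (WithTop.coe_lt_coe.2 (ENat.natCast_lt_top n))
  have h := (hd x).hasDerivAt
  rwa [show deriv (iteratedDeriv n u) x = iteratedDeriv (n + 1) u x by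
    rw [iteratedDeriv_succ]] at h

lemma SPd_core (a : Fin R → ℂ) (u : Fin R → Fin N → ℝ → ℂ)
    (hu : ∀ r i, ContDiff ℝ (⊤ : ℕ∞) (u r i)) (d : Fin N → ℕ) (v tt : Fin N → ℝ) :
    HasDerivAt (fun s : ℝ => SPd a u d (tt + s • v))
      (∑ k, ((v k : ℝ) : ℂ) * SPd a u (bump k d) tt) 0 := by
  classical
  have hterm : ∀ (r : Fin R) (i : Fin N),
      HasDerivAt (fun s : ℝ => iteratedDeriv (d i) (u r i) (tt i + s * v i))
        (v i • iteratedDeriv (d i + 1) (u r i) (tt i)) 0 := by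
    intro r i
    have h1 : HasDerivAt (fun s : ℝ => tt i + s * v i) (v i) 0 := by
      simpa using (hasDerivAt_mul_const (v i)).const_add (tt i)
    have h0 : tt i + 0 * v i = tt i := by ring
    have h2 : HasDerivAt (iteratedDeriv (d i) (u r i))
        (iteratedDeriv (d i + 1) (u r i) (tt i)) (tt i + 0 * v i) :=
      h0.symm ▸ hasDerivAt_it (hu r i) (d i) (tt i)
    simpa [Function.comp_def] using HasDerivAt.scomp (0 : ℝ) h2 h1
  have hprod : ∀ r : Fin R,
      HasDerivAt (fun s : ℝ => ∏ i, iteratedDeriv (d i) (u r i) (tt i + s * v i))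
        (∑ k, (∏ j ∈ Finset.univ.erase k, iteratedDeriv (d j) (u r j) (tt j + 0 * v j)) •
          (v k • iteratedDeriv (d k + 1) (u r k) (tt k))) 0 :=
    fun r => HasDerivAt.fun_finsetProd (fun k _ => hterm r k)
  have hsum : HasDerivAt
      (fun s : ℝ => ∑ r, a r * ∏ i, iteratedDeriv (d i) (u r i) (tt i + s * v i))
      (∑ r, a r * ∑ k, (∏ j ∈ Finset.univ.erase k,
          iteratedDeriv (d j) (u r j) (tt j + 0 * v j)) •
          (v k • iteratedDeriv (d k + 1) (u r k) (tt k))) 0 :=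
    HasDerivAt.fun_sum (fun r _ => (hprod r).const_mul (a r))
  simp only [zero_mul, add_zero] at hsum
  have hval : ∀ k : Fin N, SPd a u (bump k d) tt
      = ∑ r, a r * (iteratedDeriv (d k + 1) (u r k) (tt k) *
          ∏ j ∈ Finset.univ.erase k, iteratedDeriv (d j) (u r j) (tt j)) := by
    intro k
    unfold SPd
    refine Finset.sum_congr rfl fun r _ => ?_
    congr 1
    rw [← Finset.mul_prod_erase Finset.univ
      (fun i => iteratedDeriv (bump k d i) (u r i) (tt i)) (Finset.mem_univ k)]
    congr 1
    · simp [bump]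
    · refine Finset.prod_congr rfl fun j hj => ?_
      have : j ≠ k := Finset.ne_of_mem_erase hj
      simp [bump, this]
  have E : (∑ r, a r * ∑ k, (∏ j ∈ Finset.univ.erase k,
          iteratedDeriv (d j) (u r j) (tt j)) •
          (v k • iteratedDeriv (d k + 1) (u r k) (tt k)))
      = ∑ k, ((v k : ℝ) : ℂ) * SPd a u (bump k d) tt := by
    simp only [smul_eq_mul, Complex.real_smul, Finset.mul_sum]
    rw [Finset.sum_comm]
    refine Finset.sum_congr rfl fun k _ => ?_
    rw [hval k, Finset.mul_sum]
    exact Finset.sum_congr rfl fun r _ => by ring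
  have hfun : (fun s : ℝ => SPd a u d (tt + s • v))
      = fun s : ℝ => ∑ r, a r * ∏ i, iteratedDeriv (d i) (u r i) (tt i + s * v i) := by
    funext s
    unfold SPd
    refine Finset.sum_congr rfl fun r _ => ?_
    refine congrArg (fun z => a r * z) (Finset.prod_congr rfl fun i _ => ?_)
    simp
  rw [hfun]
  exact E ▸ hsum

lemma SPd_hasLineDerivAt_single (a : Fin R → ℂ) (u : Fin R → Fin N → ℝ → ℂ)
    (hu : ∀ r i, ContDiff ℝ (⊤ : ℕ∞) (u r i)) (d : Fin N → ℕ) (k : Fin N) (tt : Fin N → ℝ) :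
    HasLineDerivAt ℝ (SPd a u d) (SPd a u (bump k d) tt) tt (Pi.single k 1) := by
  classical
  have h := SPd_core a u hu d (Pi.single k 1) tt
  have E : (∑ k' : Fin N, (((Pi.single k 1 : Fin N → ℝ) k' : ℝ) : ℂ) * SPd a u (bump k' d) tt)
      = SPd a u (bump k d) tt := by
    rw [Finset.sum_eq_single k]
    · simp
    · intro k' _ hk'
      simp [Pi.single_apply, hk']
    · intro h; exact absurd (Finset.mem_univ k) h
  exact E ▸ h

lemma SPd_hasDerivAt_sub (a : Fin R → ℂ) (u : Fin R → Fin N → ℝ → ℂ)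
    (hu : ∀ r i, ContDiff ℝ (⊤ : ℕ∞) (u r i)) {i j : Fin N} (d : Fin N → ℕ) (tt : Fin N → ℝ) :
    HasDerivAt (fun s : ℝ => SPd a u d (tt + s • (Pi.single j 1 - Pi.single i 1)))
      (SPd a u (bump j d) tt - SPd a u (bump i d) tt) 0 := by
  classical
  have h := SPd_core a u hu d (Pi.single j 1 - Pi.single i 1) tt
  have hv : ∀ k : Fin N, (((Pi.single j 1 - Pi.single i 1 : Fin N → ℝ) k : ℝ) : ℂ)
      = (if k = j then (1 : ℂ) else 0) - (if k = i then (1 : ℂ) else 0) := by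
    intro k
    simp only [Pi.sub_apply, Pi.single_apply, Complex.ofReal_sub,
      apply_ite (fun x : ℝ => (x : ℂ)), Complex.ofReal_one, Complex.ofReal_zero]
  have E : (∑ k, (((Pi.single j 1 - Pi.single i 1 : Fin N → ℝ) k : ℝ) : ℂ)
        * SPd a u (bump k d) tt)
      = SPd a u (bump j d) tt - SPd a u (bump i d) tt := by
    simp only [hv, sub_mul, ite_mul, one_mul, zero_mul, Finset.sum_sub_distrib,
      Finset.sum_ite_eq', Finset.mem_univ, if_true]
  exact E ▸ h

section Sym

variable (a : Fin R → ℂ) (f : Fin R → Fin N → ℝ → ℂ)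

lemma sym_all (hf : ∀ r i, ContDiff ℝ (⊤ : ℕ∞) (f r i))
    (hsym : ∀ σ : Equiv.Perm (Fin N), ∀ t : Fin N → ℝ,
      (∑ r, a r * ∏ i, f r i (t (σ i))) = ∑ r, a r * ∏ i, f r i (t i))
    (π : Equiv.Perm (Fin N)) :
    ∀ (n : ℕ) (d : Fin N → ℕ), (∑ i, d i) = n →
      SPd a (fun r k => f r (π⁻¹ k)) d = SPd a f d := by
  intro n
  induction n with
  | zero =>
    intro d hd
    have hd0 : ∀ i, d i = 0 := by
      intro i
      have := (Finset.sum_eq_zero_iff.1 hd) i (Finset.mem_univ i)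
      exact this
    funext tt
    unfold SPd
    simp only [hd0, iteratedDeriv_zero]
    rw [← hsym π tt]
    refine Finset.sum_congr rfl fun r _ => ?_
    congr 1
    calc ∏ k, f r (π⁻¹ k) (tt k)
        = ∏ i, f r (π⁻¹ (π i)) (tt (π i)) :=
          (Equiv.prod_comp π (fun k => f r (π⁻¹ k) (tt k))).symm
      _ = ∏ i, f r i (tt (π i)) := by simp
  | succ n ih =>
    intro d hd
    have hex : ∃ k, d k ≠ 0 := by
      by_contra h
      push_neg at h
      simp [h] at hd
    obtain ⟨k, hk⟩ := hex
    set d' : Fin N → ℕ := Function.update d k (d k - 1) with hd'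
    have hsum' : (∑ i, d' i) = n := by
      have h1 : (∑ i, d' i) = (d k - 1) + ∑ i ∈ Finset.univ \ {k}, d i := by
        rw [hd', Finset.sum_update_of_mem (Finset.mem_univ k)]
      have h2 : (∑ i, d i) = (∑ i ∈ Finset.univ \ {k}, d i) + d k :=
        Finset.sum_eq_sum_sdiff_singleton_add (Finset.mem_univ k) d
      rw [hd] at h2
      omega
    have hdd : ∀ i, d i = bump k d' i := by
      intro i
      by_cases hik : i = k
      · subst hik
        simp [bump, hd']
        omega
      · simp [bump, hd', hik, Function.update_of_ne hik]
    have ih' := ih d' hsum'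
    funext tt
    have e1 := (SPd_hasLineDerivAt_single a (fun r m => f r (π⁻¹ m))
      (fun r m => hf r _) d' k tt).lineDeriv
    have e2 := (SPd_hasLineDerivAt_single a f hf d' k tt).lineDeriv
    calc SPd a (fun r m => f r (π⁻¹ m)) d tt
        = SPd a (fun r m => f r (π⁻¹ m)) (bump k d') tt := by
          rw [SPd_congr a (fun r m => f r (π⁻¹ m)) hdd]
      _ = lineDeriv ℝ (SPd a (fun r m => f r (π⁻¹ m)) d') tt (Pi.single k 1) := e1.symm
      _ = lineDeriv ℝ (SPd a f d') tt (Pi.single k 1) := by rw [ih']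
      _ = SPd a f (bump k d') tt := e2
      _ = SPd a f d tt := by rw [← SPd_congr a f hdd]

lemma S_perm (hf : ∀ r i, ContDiff ℝ (⊤ : ℕ∞) (f r i))
    (hsym : ∀ σ : Equiv.Perm (Fin N), ∀ t : Fin N → ℝ,
      (∑ r, a r * ∏ i, f r i (t (σ i))) = ∑ r, a r * ∏ i, f r i (t i))
    (π : Equiv.Perm (Fin N)) (d : Fin N → ℕ) (t : ℝ) :
    SPd a f (fun k => d (π k)) (fun _ => t) = SPd a f d (fun _ => t) := by
  have h := congrFun (sym_all a f hf hsym π (∑ i, d i) d rfl) (fun _ => t)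
  unfold SPd at h ⊢
  rw [← h]
  refine Finset.sum_congr rfl fun r _ => ?_
  congr 1
  rw [← Equiv.prod_comp π (fun k => iteratedDeriv (d k) (f r (π⁻¹ k)) t)]
  exact Finset.prod_congr rfl fun i _ => by simp

end Sym

section EePoly

variable (a : Fin R → ℂ) (f : Fin R → Fin N → ℝ → ℂ)

/-- evaluation of a polynomial differential operator on the sum-of-products function -/
def Ee (Q : MvPolynomial (Fin N) ℤ) : (Fin N → ℝ) → ℂ :=
  fun tt => ∑ d ∈ Q.support, ((Q.coeff d : ℤ) : ℂ) * SPd a f (⇑d) tt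

lemma Ee_superset {Q : MvPolynomial (Fin N) ℤ} {s : Finset (Fin N →₀ ℕ)}
    (hs : Q.support ⊆ s) (tt : Fin N → ℝ) :
    Ee a f Q tt = ∑ d ∈ s, ((Q.coeff d : ℤ) : ℂ) * SPd a f (⇑d) tt := by
  unfold Ee
  exact Finset.sum_subset hs (fun d _ hd => by
    rw [MvPolynomial.notMem_support_iff.1 hd]; simp)

lemma Ee_monomial (d : Fin N →₀ ℕ) (c : ℤ) (tt : Fin N → ℝ) :
    Ee a f (MvPolynomial.monomial d c) tt = (c : ℂ) * SPd a f (⇑d) tt := by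
  classical
  unfold Ee
  by_cases hc : c = 0
  · simp [hc]
  · rw [MvPolynomial.support_monomial, if_neg hc, Finset.sum_singleton,
      MvPolynomial.coeff_monomial, if_pos rfl]

lemma Ee_add (P Q : MvPolynomial (Fin N) ℤ) :
    Ee a f (P + Q) = Ee a f P + Ee a f Q := by
  classical
  funext tt
  rw [Pi.add_apply,
    Ee_superset a f (MvPolynomial.support_add (p := P) (q := Q)) tt,
    Ee_superset a f (Finset.subset_union_left (s₁ := P.support) (s₂ := Q.support)) tt,
    Ee_superset a f (Finset.subset_union_right (s₁ := P.support) (s₂ := Q.support)) tt,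
    ← Finset.sum_add_distrib]
  refine Finset.sum_congr rfl fun d _ => ?_
  rw [MvPolynomial.coeff_add]
  push_cast
  ring

/-- `Ee` as an additive monoid hom. -/
def EeHom : MvPolynomial (Fin N) ℤ →+ ((Fin N → ℝ) → ℂ) :=
  AddMonoidHom.mk' (Ee a f) (Ee_add a f)

lemma Ee_zsmul (c : ℤ) (Q : MvPolynomial (Fin N) ℤ) (tt : Fin N → ℝ) :
    Ee a f (c • Q) tt = (c : ℂ) * Ee a f Q tt := by
  rw [Ee_superset a f (MvPolynomial.support_smul (a := c) (f := Q)) tt]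
  unfold Ee
  rw [Finset.mul_sum]
  refine Finset.sum_congr rfl fun d hd => ?_
  rw [MvPolynomial.coeff_smul, smul_eq_mul]
  push_cast
  ring

lemma Ee_sub (P Q : MvPolynomial (Fin N) ℤ) (tt : Fin N → ℝ) :
    Ee a f (P - Q) tt = Ee a f P tt - Ee a f Q tt := by
  have h : P - Q = P + (-1 : ℤ) • Q := by
    rw [neg_one_zsmul, sub_eq_add_neg]
  rw [h, congrFun (Ee_add a f P ((-1 : ℤ) • Q)) tt, Pi.add_apply, Ee_zsmul]
  push_cast
  ring

lemma Ee_mul_X (j : Fin N) (Q : MvPolynomial (Fin N) ℤ) (tt : Fin N → ℝ) :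
    Ee a f (MvPolynomial.X j * Q) tt
      = ∑ d ∈ Q.support, ((Q.coeff d : ℤ) : ℂ) * SPd a f (bump j ⇑d) tt := by
  classical
  unfold Ee
  rw [MvPolynomial.support_X_mul, Finset.sum_map]
  refine Finset.sum_congr rfl fun d hd => ?_
  rw [addLeftEmbedding_apply, MvPolynomial.coeff_X_mul]
  congr 1
  rw [SPd_congr a f (d' := bump j ⇑d) (fun i => ?_)]
  simp only [Finsupp.add_apply, Finsupp.single_apply, bump]
  by_cases hij : j = i <;> simp [hij, eq_comm, add_comm]

lemma Ee_Dop (hf : ∀ r i, ContDiff ℝ (⊤ : ℕ∞) (f r i)) {i j : Fin N} (Q : MvPolynomial (Fin N) ℤ) :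
    Dop N i j (Ee a f Q) = Ee a f ((MvPolynomial.X j - MvPolynomial.X i) * Q) := by
  classical
  funext tt
  have hterm : ∀ d ∈ Q.support, HasDerivAt
      (fun s : ℝ => ((Q.coeff d : ℤ) : ℂ) * SPd a f (⇑d) (tt + s • (Pi.single j 1 - Pi.single i 1)))
      (((Q.coeff d : ℤ) : ℂ) * (SPd a f (bump j ⇑d) tt - SPd a f (bump i ⇑d) tt)) 0 :=
    fun d _ => (SPd_hasDerivAt_sub a f hf (⇑d) tt).const_mul _
  have H : HasLineDerivAt ℝ (Ee a f Q)
      (∑ d ∈ Q.support, ((Q.coeff d : ℤ) : ℂ) * (SPd a f (bump j ⇑d) tt - SPd a f (bump i ⇑d) tt))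
      tt (Pi.single j 1 - Pi.single i 1) := HasDerivAt.fun_sum hterm
  rw [show Dop N i j (Ee a f Q) tt
      = lineDeriv ℝ (Ee a f Q) tt (Pi.single j 1 - Pi.single i 1) from rfl,
    H.lineDeriv, sub_mul, Ee_sub, Ee_mul_X, Ee_mul_X, ← Finset.sum_sub_distrib]
  exact Finset.sum_congr rfl fun d _ => by ring

lemma applyOps_Ee (hf : ∀ r i, ContDiff ℝ (⊤ : ℕ∞) (f r i)) :
    ∀ (ps : List (Fin N × Fin N)) (Q : MvPolynomial (Fin N) ℤ),
      applyOps N ps (Ee a f Q)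
        = Ee a f ((ps.map fun p => (MvPolynomial.X p.2 - MvPolynomial.X p.1) ^ 2).prod * Q) := by
  intro ps
  induction ps with
  | nil => intro Q; simp [applyOps]
  | cons p ps ih =>
    intro Q
    show Dop N p.1 p.2 (Dop N p.1 p.2 (applyOps N ps (Ee a f Q))) = _
    rw [ih Q, Ee_Dop a f hf, Ee_Dop a f hf, List.map_cons, List.prod_cons]
    set W : MvPolynomial (Fin N) ℤ := (ps.map fun p => (MvPolynomial.X p.2 - MvPolynomial.X p.1) ^ 2).prod with hW
    congr 1
    ring

end EePoly

lemma prod_monomial_one {ι : Type*} (s : Finset ι) (g : ι → (Fin N →₀ ℕ)) :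
    (∏ i ∈ s, (MvPolynomial.monomial (g i) (1 : ℤ))) = MvPolynomial.monomial (∑ i ∈ s, g i) 1 := by
  classical
  induction s using Finset.induction_on with
  | empty =>
    rw [Finset.prod_empty, Finset.sum_empty, ← MvPolynomial.C_apply, map_one]
  | insert _ _ h ih =>
    rw [Finset.prod_insert h, Finset.sum_insert h, ih, MvPolynomial.monomial_mul, one_mul]

lemma coe_sum_single (σ : Equiv.Perm (Fin N)) (k : Fin N) :
    (∑ i : Fin N, Finsupp.single (σ i) (i : ℕ)) k = ((σ⁻¹ k : Fin N) : ℕ) := by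
  classical
  rw [Finset.sum_apply']
  rw [Finset.sum_eq_single (σ⁻¹ k)]
  · simp [Equiv.apply_symm_apply]
  · intro i _ hi
    rw [Finsupp.single_apply, if_neg]
    intro h
    exact hi (by rw [← h]; simp)
  · intro h; exact absurd (Finset.mem_univ _) h

end Statement12Aux

open Statement12Aux

/-- if `g(t) = Σ_r a_r ∏_i f_{r,i}(t_i)` is symmetric, then applying
`∏_{i<j} (∂/∂t_j - ∂/∂t_i)²` (the composition over any enumeration of the pairs `i < j`)
and evaluating on the diagonal `t_1 = ⋯ = t_N = t` gives
`N! Σ_r a_r det[f_{r,i}^{(i+j)}(t)]_{0 ≤ i,j ≤ N-1}`. -/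
theorem statement12 (N R : ℕ) (hN : 1 ≤ N) (hR : 1 ≤ R)
    (a : Fin R → ℂ) (f : Fin R → Fin N → ℝ → ℂ)
    (hf : ∀ r i, ContDiff ℝ (⊤ : ℕ∞) (f r i))
    (hsym : ∀ σ : Equiv.Perm (Fin N), ∀ t : Fin N → ℝ,
      (∑ r, a r * ∏ i, f r i (t (σ i))) = ∑ r, a r * ∏ i, f r i (t i))
    (ps : List (Fin N × Fin N)) (hnd : ps.Nodup)
    (hps : ∀ q : Fin N × Fin N, q ∈ ps ↔ q.1 < q.2)
    (t : ℝ) :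
    applyOps N ps (fun tt => ∑ r, a r * ∏ i, f r i (tt i)) (fun _ => t)
      = (N.factorial : ℂ) * ∑ r, a r *
          Matrix.det (Matrix.of fun i j : Fin N =>
            iteratedDeriv ((i : ℕ) + (j : ℕ)) (f r i) t) := by
  classical
  have hne : ∀ p ∈ ps, p.1 ≠ p.2 := fun p hp => ne_of_lt ((hps p).1 hp)
  have hone : (1 : MvPolynomial (Fin N) ℤ) = MvPolynomial.monomial 0 1 := by
    rw [← MvPolynomial.C_apply, map_one]
  have hg : (fun tt : Fin N → ℝ => ∑ r, a r * ∏ i, f r i (tt i)) = Ee a f 1 := by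
    funext tt
    rw [hone, Ee_monomial]
    unfold SPd
    simp
  rw [hg, applyOps_Ee a f hf ps 1, mul_one]
  have hW : ((ps.map fun p => (MvPolynomial.X p.2 - MvPolynomial.X p.1) ^ 2).prod
        : MvPolynomial (Fin N) ℤ)
      = (∏ i : Fin N, ∏ j ∈ Finset.Ioi i, (MvPolynomial.X j - MvPolynomial.X i)) ^ 2 := by
    rw [← List.prod_toFinset _ hnd]
    have hset : ps.toFinset = Finset.univ.filter (fun q : Fin N × Fin N => q.1 < q.2) := by
      ext q
      simp [List.mem_toFinset, hps q]
    rw [hset, Finset.prod_finset_product _ Finset.univ (fun i => Finset.Ioi i)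
      (fun p => by simp [Finset.mem_Ioi])]
    simp_rw [Finset.prod_pow]
  have hV : (∏ i : Fin N, ∏ j ∈ Finset.Ioi i,
        (MvPolynomial.X j - MvPolynomial.X i : MvPolynomial (Fin N) ℤ))
      = ∑ σ : Equiv.Perm (Fin N), Equiv.Perm.sign σ •
          MvPolynomial.monomial (∑ i : Fin N, Finsupp.single (σ i) (i : ℕ)) (1 : ℤ) := by
    rw [← Matrix.det_vandermonde (fun i => (MvPolynomial.X i : MvPolynomial (Fin N) ℤ)),
      Matrix.det_apply]
    refine Finset.sum_congr rfl fun σ _ => ?_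
    congr 1
    rw [← prod_monomial_one]
    refine Finset.prod_congr rfl fun i _ => ?_
    rw [Matrix.vandermonde_apply, MvPolynomial.X_pow_eq_monomial]
  rw [hW, sq, hV, Finset.sum_mul_sum]
  rw [show Ee a f = ⇑(EeHom a f) from rfl]
  simp only [map_sum, Finset.sum_apply]
  have hterm : ∀ σ τ : Equiv.Perm (Fin N),
      Ee a f ((Equiv.Perm.sign σ •
          MvPolynomial.monomial (∑ i : Fin N, Finsupp.single (σ i) (i : ℕ)) (1 : ℤ)) *
        (Equiv.Perm.sign τ •
          MvPolynomial.monomial (∑ i : Fin N, Finsupp.single (τ i) (i : ℕ)) (1 : ℤ)))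
        (fun _ => t)
      = ((Equiv.Perm.sign (τ⁻¹ * σ) : ℤ) : ℂ) *
          SPd a f (fun k => (k : ℕ) + (((τ⁻¹ * σ) k : Fin N) : ℕ)) (fun _ => t) := by
    intro σ τ
    rw [Units.smul_def, Units.smul_def, smul_mul_smul_comm, MvPolynomial.monomial_mul,
      one_mul, ← smul_smul, Ee_zsmul, Ee_zsmul, Ee_monomial]
    have hm : ∀ k : Fin N,
        (((∑ i : Fin N, Finsupp.single (σ i) (i : ℕ))
          + (∑ i : Fin N, Finsupp.single (τ i) (i : ℕ))) k : ℕ)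
        = ((σ⁻¹ k : Fin N) : ℕ) + ((τ⁻¹ k : Fin N) : ℕ) := by
      intro k
      rw [Finsupp.add_apply, coe_sum_single, coe_sum_single]
    rw [SPd_congr a f hm]
    have hS : SPd a f (fun k => ((σ⁻¹ k : Fin N) : ℕ) + ((τ⁻¹ k : Fin N) : ℕ)) (fun _ => t)
        = SPd a f (fun k => (k : ℕ) + (((τ⁻¹ * σ) k : Fin N) : ℕ)) (fun _ => t) := by
      have h := S_perm a f hf hsym σ⁻¹
        (fun k => (k : ℕ) + (((τ⁻¹ * σ) k : Fin N) : ℕ)) t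
      rw [← h]
      refine congrFun (SPd_congr a f fun k => ?_) _
      simp [Equiv.Perm.mul_apply, Equiv.apply_symm_apply]
    rw [hS]
    have hsgn : ((Equiv.Perm.sign (τ⁻¹ * σ) : ℤ) : ℂ)
        = ((Equiv.Perm.sign σ : ℤ) : ℂ) * ((Equiv.Perm.sign τ : ℤ) : ℂ) := by
      rw [map_mul, Equiv.Perm.sign_inv]
      push_cast [Units.val_mul]
      ring
    rw [hsgn]
    ring
  have hstep : (∑ σ : Equiv.Perm (Fin N), ∑ τ : Equiv.Perm (Fin N),
      Ee a f ((Equiv.Perm.sign σ •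
          MvPolynomial.monomial (∑ i : Fin N, Finsupp.single (σ i) (i : ℕ)) (1 : ℤ)) *
        (Equiv.Perm.sign τ •
          MvPolynomial.monomial (∑ i : Fin N, Finsupp.single (τ i) (i : ℕ)) (1 : ℤ)))
        (fun _ => t))
      = (N.factorial : ℂ) * ∑ ρ : Equiv.Perm (Fin N),
          ((Equiv.Perm.sign ρ : ℤ) : ℂ) *
            SPd a f (fun k => (k : ℕ) + ((ρ k : Fin N) : ℕ)) (fun _ => t) := by
    have h2 : ∀ σ : Equiv.Perm (Fin N), (∑ τ : Equiv.Perm (Fin N),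
        Ee a f ((Equiv.Perm.sign σ •
            MvPolynomial.monomial (∑ i : Fin N, Finsupp.single (σ i) (i : ℕ)) (1 : ℤ)) *
          (Equiv.Perm.sign τ •
            MvPolynomial.monomial (∑ i : Fin N, Finsupp.single (τ i) (i : ℕ)) (1 : ℤ)))
          (fun _ => t))
        = ∑ ρ : Equiv.Perm (Fin N), ((Equiv.Perm.sign ρ : ℤ) : ℂ) *
            SPd a f (fun k => (k : ℕ) + ((ρ k : Fin N) : ℕ)) (fun _ => t) := by
      intro σ
      rw [Finset.sum_congr rfl fun τ _ => hterm σ τ]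
      exact Equiv.sum_comp ((Equiv.inv (Equiv.Perm (Fin N))).trans (Equiv.mulRight σ))
        (fun ρ => ((Equiv.Perm.sign ρ : ℤ) : ℂ) *
          SPd a f (fun k => (k : ℕ) + ((ρ k : Fin N) : ℕ)) (fun _ => t))
    rw [Finset.sum_congr rfl fun σ _ => h2 σ, Finset.sum_const, Finset.card_univ,
      Fintype.card_perm, Fintype.card_fin, nsmul_eq_mul]
  refine Eq.trans hstep ?_
  congr 1
  have hdet : ∀ r : Fin R, (Matrix.of fun i j : Fin N =>
        iteratedDeriv ((i : ℕ) + (j : ℕ)) (f r i) t).det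
      = ∑ ρ : Equiv.Perm (Fin N), ((Equiv.Perm.sign ρ : ℤ) : ℂ) *
          ∏ k : Fin N, iteratedDeriv ((k : ℕ) + ((ρ k : Fin N) : ℕ)) (f r k) t := by
    intro r
    rw [Matrix.det_apply,
      ← Equiv.sum_comp (Equiv.inv (Equiv.Perm (Fin N)))
        (fun σ => Equiv.Perm.sign σ • ∏ i, (Matrix.of fun i j : Fin N =>
          iteratedDeriv ((i : ℕ) + (j : ℕ)) (f r i) t) (σ i) i)]
    refine Finset.sum_congr rfl fun ρ _ => ?_
    rw [show (Equiv.inv (Equiv.Perm (Fin N))) ρ = ρ⁻¹ from rfl,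
      Equiv.Perm.sign_inv, Units.smul_def, zsmul_eq_mul]
    congr 1
    rw [← Equiv.prod_comp ρ (fun i => (Matrix.of fun i j : Fin N =>
      iteratedDeriv ((i : ℕ) + (j : ℕ)) (f r i) t) (ρ⁻¹ i) i)]
    refine Finset.prod_congr rfl fun k _ => ?_
    simp [Matrix.of_apply, Equiv.symm_apply_apply]
  unfold SPd
  simp only [Finset.mul_sum]
  rw [Finset.sum_comm]
  refine Finset.sum_congr rfl fun r _ => ?_
  rw [hdet r, Finset.mul_sum]
  refine Finset.sum_congr rfl fun ρ _ => by ring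

end
end
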